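/- For complex s and w with Re(s) > 1/2, Re(s+w-1) > 0, and Re(s-w) > 0, and n a positive integer, the double integral over u, y in (0, infinity)^2 of exp(-pi*n*y*(u + u^{-1} + 2)) * y^{s - 3/2} * u^{w - 3/2} du dy equals pi^{1/2 - s} * n^{1/2 - s} * Gamma(s - 1/2) * Gamma(s - w) * Gamma(s + w - 1) / Gamma(2s - 1). -/

import Mathlib

open MeasureTheory Real

private lemma aux_cpow_add {p : ℝ} (hp : 0 < p) (z z' : ℂ) :
    (p : ℂ) ^ z * (p : ℂ) ^ z' = (p : ℂ) ^ (z + z') :=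
  (Complex.cpow_add _ _ (Complex.ofReal_ne_zero.mpr hp.ne')).symm

private lemma aux_inv_cpow {q : ℝ} (hq : 0 < q) (z : ℂ) :
    ((q⁻¹ : ℝ) : ℂ) ^ z = (q : ℂ) ^ (-z) := by
  rw [Complex.ofReal_inv, Complex.inv_cpow _ _ (by
    rw [Complex.arg_ofReal_of_nonneg hq.le]; exact (Real.pi_ne_zero).symm),
    ← Complex.cpow_neg]

private lemma aux_div_cpow {p q : ℝ} (hp : 0 < p) (hq : 0 < q) (z : ℂ) :
    ((p / q : ℝ) : ℂ) ^ z = (p : ℂ) ^ z * (q : ℂ) ^ (-z) := by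
  rw [div_eq_mul_inv, Complex.ofReal_mul]
  rw [Complex.mul_cpow_ofReal_nonneg hp.le (le_of_lt (inv_pos.mpr hq)) z]
  rw [aux_inv_cpow hq]

/-- The beta integral over `(0, ∞)`. -/
private lemma beta_Ioi {a b : ℂ} (ha : 0 < a.re) (hb : 0 < b.re) :
    ∫ u in Set.Ioi (0 : ℝ), (u : ℂ) ^ (a - 1) * ((1 + u : ℝ) : ℂ) ^ (-(a + b))
      = Complex.Gamma a * Complex.Gamma b / Complex.Gamma (a + b) := by
  have himg : (fun x : ℝ => x / (1 - x)) '' Set.Ioo 0 1 = Set.Ioi 0 := by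
    ext u
    constructor
    · rintro ⟨x, hx, rfl⟩
      exact div_pos hx.1 (by linarith [hx.2])
    · intro hu
      rw [Set.mem_Ioi] at hu
      refine ⟨u / (1 + u), ⟨div_pos hu (by linarith), (div_lt_one (by linarith)).mpr
        (by linarith)⟩, ?_⟩
      have h1u : (1 : ℝ) + u ≠ 0 := by positivity
      field_simp
      ring
  have hinj : Set.InjOn (fun x : ℝ => x / (1 - x)) (Set.Ioo 0 1) := by
    intro x hx y hy h
    have hx1 : (1 : ℝ) - x ≠ 0 := by have := hx.2; intro h'; linarith
    have hy1 : (1 : ℝ) - y ≠ 0 := by have := hy.2; intro h'; linarith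
    field_simp at h
    linarith
  have hderiv : ∀ x ∈ Set.Ioo (0 : ℝ) 1,
      HasDerivWithinAt (fun x : ℝ => x / (1 - x)) (((1 - x) ^ 2)⁻¹) (Set.Ioo 0 1) x := by
    intro x hx
    have hx1 : (1 : ℝ) - x ≠ 0 := by have := hx.2; intro h'; linarith
    have h := (hasDerivAt_id x).div (((hasDerivAt_const x (1 : ℝ))).sub (hasDerivAt_id x)) hx1
    convert h.hasDerivWithinAt using 1
    · rfl
    · rfl
    · rfl
    · simp only [Pi.sub_apply, id_eq]
      ring
  rw [← himg, integral_image_eq_integral_abs_deriv_smul measurableSet_Ioo hderiv hinj]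
  have heq : ∀ x ∈ Set.Ioo (0 : ℝ) 1,
      |(((1 - x) ^ 2)⁻¹)| • ((((x / (1 - x) : ℝ)) : ℂ) ^ (a - 1)
          * ((1 + x / (1 - x) : ℝ) : ℂ) ^ (-(a + b)))
        = (x : ℂ) ^ (a - 1) * ((1 : ℂ) - x) ^ (b - 1) := by
    intro x hx
    have hx0 : (0 : ℝ) < x := hx.1
    have hx1 : (0 : ℝ) < 1 - x := by linarith [hx.2]
    have h1 : (1 : ℝ) + x / (1 - x) = 1 / (1 - x) := by field_simp; ring
    have hpow : ((((1 - x) ^ 2)⁻¹ : ℝ) : ℂ) = ((1 - x : ℝ) : ℂ) ^ (-2 : ℂ) := by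
      rw [show (-2 : ℂ) = -((2 : ℕ) : ℂ) by norm_num, Complex.cpow_neg,
        Complex.cpow_natCast]
      push_cast
      ring
    rw [Complex.real_smul, abs_of_pos (by positivity), hpow, aux_div_cpow hx0 hx1, h1,
      aux_div_cpow one_pos hx1, Complex.ofReal_one, Complex.one_cpow, one_mul]
    have h2 : (1 : ℂ) - (x : ℂ) = ((1 - x : ℝ) : ℂ) := by push_cast; ring
    rw [h2]
    calc ((1 - x : ℝ) : ℂ) ^ (-2 : ℂ)
          * ((x : ℂ) ^ (a - 1) * ((1 - x : ℝ) : ℂ) ^ (-(a - 1))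
            * ((1 - x : ℝ) : ℂ) ^ (-(-(a + b))))
        = (x : ℂ) ^ (a - 1) * (((1 - x : ℝ) : ℂ) ^ (-2 : ℂ)
            * ((1 - x : ℝ) : ℂ) ^ (-(a - 1)) * ((1 - x : ℝ) : ℂ) ^ (-(-(a + b)))) := by
          ring
      _ = (x : ℂ) ^ (a - 1) * ((1 - x : ℝ) : ℂ) ^ (b - 1) := by
          rw [aux_cpow_add hx1, aux_cpow_add hx1]
          congr 1
          ring
  rw [setIntegral_congr_fun measurableSet_Ioo heq]
  have hbeta := Complex.Gamma_mul_Gamma_eq_betaIntegral ha hb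
  have hGne : Complex.Gamma (a + b) ≠ 0 :=
    Complex.Gamma_ne_zero_of_re_pos (by rw [Complex.add_re]; linarith)
  have hb2 : ∫ x in Set.Ioo (0:ℝ) 1, (x : ℂ) ^ (a - 1) * (1 - (x : ℂ)) ^ (b - 1)
      = Complex.betaIntegral a b := by
    rw [Complex.betaIntegral, intervalIntegral.integral_of_le zero_le_one,
      integral_Ioc_eq_integral_Ioo]
  rw [hb2, eq_div_iff hGne]
  linear_combination -hbeta

/-- For complex `s, w` with `Re(s) > 1/2`, `Re(s+w-1) > 0`, `Re(s-w) > 0`, and `n ≥ 1`,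
`∫_0^∞ ∫_0^∞ exp(-π n y (u+u⁻¹+2)) y^{s-3/2} u^{w-3/2} dy du
  = π^{1/2-s} n^{1/2-s} Γ(s-1/2) Γ(s-w) Γ(s+w-1) / Γ(2s-1)`. -/
theorem stmt_5 (s w : ℂ) (hs : 1 / 2 < s.re) (h1 : 0 < (s + w - 1).re) (h2 : 0 < (s - w).re)
    (n : ℕ) (hn : 0 < n) :
    ∫ u in Set.Ioi (0 : ℝ), ∫ y in Set.Ioi (0 : ℝ),
        (Real.exp (-(π * n * y * (u + u⁻¹ + 2))) : ℂ) * (y : ℂ) ^ (s - 3 / 2)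
          * (u : ℂ) ^ (w - 3 / 2)
      = ((π : ℝ) : ℂ) ^ (1 / 2 - s) * (n : ℂ) ^ (1 / 2 - s) * Complex.Gamma (s - 1 / 2)
          * Complex.Gamma (s - w) * Complex.Gamma (s + w - 1) / Complex.Gamma (2 * s - 1) := by
  have hs' : 0 < (s - 1 / 2).re := by
    rw [Complex.sub_re]
    norm_num
    linarith
  have hπn : (0 : ℝ) < π * n := by positivity
  have key : ∀ u ∈ Set.Ioi (0 : ℝ),
      (∫ y in Set.Ioi (0 : ℝ),
          (Real.exp (-(π * n * y * (u + u⁻¹ + 2))) : ℂ) * (y : ℂ) ^ (s - 3 / 2)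
            * (u : ℂ) ^ (w - 3 / 2))
        = (Complex.Gamma (s - 1 / 2) * ((π * n : ℝ) : ℂ) ^ (1 / 2 - s))
            * ((u : ℂ) ^ ((s + w - 1) - 1)
              * ((1 + u : ℝ) : ℂ) ^ (-((s + w - 1) + (s - w)))) := by
    intro u hu
    rw [Set.mem_Ioi] at hu
    have hc : (0 : ℝ) < u + u⁻¹ + 2 := by positivity
    have h1u : (0 : ℝ) < 1 + u := by linarith
    set r : ℝ := π * n * (u + u⁻¹ + 2) with hr_def
    have hr : 0 < r := by positivity
    have step1 : ∀ y : ℝ,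
        (Real.exp (-(π * n * y * (u + u⁻¹ + 2))) : ℂ) * (y : ℂ) ^ (s - 3 / 2)
            * (u : ℂ) ^ (w - 3 / 2)
          = ((y : ℂ) ^ ((s - 1 / 2) - 1) * Complex.exp (-((r : ℂ) * y)))
              * (u : ℂ) ^ (w - 3 / 2) := by
      intro y
      have he : (Real.exp (-(π * n * y * (u + u⁻¹ + 2))) : ℂ)
          = Complex.exp (-((r : ℂ) * y)) := by
        rw [Complex.ofReal_exp]
        congr 1
        push_cast [hr_def]
        ring
      rw [he]
      have hexp : s - 3 / 2 = (s - 1 / 2) - 1 := by ring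
      rw [hexp]
      ring
    rw [setIntegral_congr_fun measurableSet_Ioi (fun y _ => step1 y),
      MeasureTheory.integral_mul_const,
      Complex.integral_cpow_mul_exp_neg_mul_Ioi hs' hr]
    have hinv : (1 / (r : ℂ)) ^ (s - 1 / 2) = ((r : ℝ) : ℂ) ^ (-(s - 1 / 2)) := by
      rw [one_div, ← Complex.ofReal_inv, aux_inv_cpow hr]
    rw [hinv]
    have hsplit : ((r : ℝ) : ℂ) ^ (-(s - 1 / 2))
        = ((π * n : ℝ) : ℂ) ^ (-(s - 1 / 2))
            * ((u + u⁻¹ + 2 : ℝ) : ℂ) ^ (-(s - 1 / 2)) := by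
      rw [hr_def, Complex.ofReal_mul]
      rw [Complex.mul_cpow_ofReal_nonneg hπn.le hc.le]
    have hcalc : u + u⁻¹ + 2 = (1 + u) ^ 2 / u := by
      field_simp
      ring
    have hsq : ((u + u⁻¹ + 2 : ℝ) : ℂ) ^ (-(s - 1 / 2))
        = ((1 + u : ℝ) : ℂ) ^ (-((s + w - 1) + (s - w)))
            * (u : ℂ) ^ (s - 1 / 2) := by
      rw [hcalc, aux_div_cpow (by positivity) hu, neg_neg]
      congr 1
      have : (((1 + u) ^ 2 : ℝ) : ℂ) = ((1 + u : ℝ) : ℂ) * ((1 + u : ℝ) : ℂ) := by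
        push_cast
        ring
      rw [this, Complex.mul_cpow_ofReal_nonneg h1u.le h1u.le, aux_cpow_add h1u]
      congr 1
      ring
    rw [hsplit, hsq]
    have hpi2 : ((π * n : ℝ) : ℂ) ^ (-(s - 1 / 2)) = ((π * n : ℝ) : ℂ) ^ (1 / 2 - s) := by
      congr 1
      ring
    rw [hpi2]
    have hu2 : (u : ℂ) ^ (s - 1 / 2) * (u : ℂ) ^ (w - 3 / 2)
        = (u : ℂ) ^ ((s + w - 1) - 1) := by
      rw [aux_cpow_add hu]
      congr 1
      ring
    calc ((π * n : ℝ) : ℂ) ^ (1 / 2 - s) * (((1 + u : ℝ) : ℂ) ^ (-((s + w - 1) + (s - w)))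
            * (u : ℂ) ^ (s - 1 / 2)) * Complex.Gamma (s - 1 / 2) * (u : ℂ) ^ (w - 3 / 2)
        = (Complex.Gamma (s - 1 / 2) * ((π * n : ℝ) : ℂ) ^ (1 / 2 - s))
            * (((u : ℂ) ^ (s - 1 / 2) * (u : ℂ) ^ (w - 3 / 2))
              * ((1 + u : ℝ) : ℂ) ^ (-((s + w - 1) + (s - w)))) := by ring
      _ = _ := by rw [hu2]
  rw [setIntegral_congr_fun measurableSet_Ioi key, MeasureTheory.integral_const_mul,
    beta_Ioi h1 h2]
  have hsum : (s + w - 1) + (s - w) = 2 * s - 1 := by ring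
  rw [hsum]
  have hmul : ((π * n : ℝ) : ℂ) ^ (1 / 2 - s)
      = ((π : ℝ) : ℂ) ^ (1 / 2 - s) * (n : ℂ) ^ (1 / 2 - s) := by
    rw [Complex.ofReal_mul]
    rw [Complex.mul_cpow_ofReal_nonneg Real.pi_pos.le (Nat.cast_nonneg n)]
    norm_cast
  rw [hmul]
  ring
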